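/- arXiv:2112.13190 — 2 statements merged into one kernel-verified Lean document; each statement's English description precedes it below -/
import Mathlib

section
/- For every ε > 0 there exists a constant c > 0 such that the following holds: for every probability p₀ with 0 < p₀ ≤ 1 and every graph H with e(H)·p₀ ≥ c, E[q*(H_{p₀})] > sup_{p₀ ≤ p ≤ 1} E[q*(H_p)] − ε. -/
open Finset
open scoped Classical

/-- The number of edges of a finite graph. -/
noncomputable def edgeCount {V : Type} [Fintype V] [DecidableEq V] (G : SimpleGraph V) : ℕ :=
  G.edgeFinset.card

/-- vol(A): the sum over vertices of A of their degree in G. -/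
noncomputable def degSum {V : Type} [Fintype V] [DecidableEq V] (G : SimpleGraph V)
    (A : Finset V) : ℕ :=
  ∑ v ∈ A, G.degree v

/-- e(A): the number of edges of G with both endpoints in A. -/
noncomputable def intEdges {V : Type} [Fintype V] [DecidableEq V] (G : SimpleGraph V)
    (A : Finset V) : ℕ :=
  (G.edgeFinset.filter (fun e => ∀ v ∈ e, v ∈ A)).card

/-- The modularity score q_𝒜(G) of a vertex partition 𝒜 of G; it is 0 if G has no edges. -/
noncomputable def modScore {V : Type} [Fintype V] [DecidableEq V] (G : SimpleGraph V)
    (P : Finpartition (univ : Finset V)) : ℝ :=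
  if edgeCount G = 0 then 0 else
    (∑ A ∈ P.parts, (intEdges G A : ℝ)) / (edgeCount G : ℝ)
      - (∑ A ∈ P.parts, (degSum G A : ℝ) ^ 2) / (4 * (edgeCount G : ℝ) ^ 2)

/-- The modularity q*(G) of a graph: the maximum of q_𝒜(G) over all vertex partitions 𝒜. -/
noncomputable def modularity {V : Type} [Fintype V] [DecidableEq V] (G : SimpleGraph V) : ℝ :=
  ⨆ P : Finpartition (univ : Finset V), modScore G P

/-- The probability that the random subgraph G_p of G (each edge of G retained
independently with probability p) satisfies the predicate Q. -/
noncomputable def subgraphProb {V : Type} [Fintype V] [DecidableEq V] (G : SimpleGraph V)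
    (p : ℝ) (Q : SimpleGraph V → Prop) : ℝ :=
  ∑ F ∈ G.edgeFinset.powerset,
    if Q (SimpleGraph.fromEdgeSet (F : Set (Sym2 V))) then
      p ^ F.card * (1 - p) ^ (G.edgeFinset.card - F.card)
    else 0

/-- The expected modularity E[q*(G_p)] of the random subgraph G_p of G, in which
each edge of G is retained independently with probability p. -/
noncomputable def expMod {V : Type} [Fintype V] [DecidableEq V] (G : SimpleGraph V)
    (p : ℝ) : ℝ :=
  ∑ F ∈ G.edgeFinset.powerset,
    p ^ F.card * (1 - p) ^ (G.edgeFinset.card - F.card) *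
      modularity (SimpleGraph.fromEdgeSet (F : Set (Sym2 V)))

/-!
Sample `H_{p₀}` in two stages: first `H_p`, then keep each edge of `H_p` with probability
`q = p₀ / p`. It then suffices that `E[q*(H_q)] ≥ q*(H) - ε/2` whenever `q·e(H) ≥ c₁`: the
complementary event `q·e(H_p) < c₁` forces `e(H_p) < p·e(H)/2`, which by Chebyshev has
probability at most `4 / (p·e(H)) ≤ ε/4`.

For the subsampling bound fix a partition of `H`, put `μ = q·e(H)`, and let `X(F)`, `Y(F)` be
the sums of `e(A)` and `vol(A)²` over its parts in the graph with edge set `F`. For every `F`,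
`q*(F) ≥ X(F)/((1+θ)μ) - (e(F)-μ)²/(θμ)² - Y(F)/(4(1-θ)²μ²)`: within the window
`|e(F) - μ| ≤ θμ` this is the score of the partition with perturbed denominators, and outside it
the deviation term dominates. The right-hand side is a polynomial of degree two in the edge
indicators, so its expectation is explicit: `E X = q·X(H)`, `E (e - μ)² ≤ μ` and
`E Y ≤ q²·Y(H) + 4μ`. This yields `E[q*(H_q)] ≥ q_𝒜(H) - 9θ - 2/(θ²μ)`.
-/

section SubsetExpect

variable {α : Type*}

/-- The expectation of `f S` for a random subset `S ⊆ s` containing each element independently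
with probability `p`. -/
noncomputable def subsetExpect (s : Finset α) (p : ℝ) (f : Finset α → ℝ) : ℝ :=
  ∑ F ∈ s.powerset, p ^ #F * (1 - p) ^ (#s - #F) * f F

variable {s : Finset α} {p : ℝ}

lemma subsetExpect_congr {f g : Finset α → ℝ} (h : ∀ F ⊆ s, f F = g F) :
    subsetExpect s p f = subsetExpect s p g :=
  sum_congr rfl fun F hF => by rw [h F (mem_powerset.mp hF)]

lemma subsetExpect_const (c : ℝ) : subsetExpect s p (fun _ => c) = c := by
  rw [subsetExpect, ← sum_mul, sum_pow_mul_eq_add_pow, add_sub_cancel, one_pow, one_mul]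

lemma subsetExpect_add (f g : Finset α → ℝ) :
    subsetExpect s p (fun F => f F + g F) = subsetExpect s p f + subsetExpect s p g := by
  simp only [subsetExpect, mul_add, sum_add_distrib]

lemma subsetExpect_sub (f g : Finset α → ℝ) :
    subsetExpect s p (fun F => f F - g F) = subsetExpect s p f - subsetExpect s p g := by
  simp only [subsetExpect, mul_sub, sum_sub_distrib]

lemma subsetExpect_const_mul (c : ℝ) (f : Finset α → ℝ) :
    subsetExpect s p (fun F => c * f F) = c * subsetExpect s p f := by
  simp only [subsetExpect, mul_sum]
  exact sum_congr rfl fun F _ => by ring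

lemma subsetExpect_div_const (f : Finset α → ℝ) (c : ℝ) :
    subsetExpect s p (fun F => f F / c) = subsetExpect s p f / c := by
  simp only [subsetExpect, sum_div, mul_div_assoc]

lemma subsetExpect_sum {ι : Type*} (t : Finset ι) (f : ι → Finset α → ℝ) :
    subsetExpect s p (fun F => ∑ i ∈ t, f i F) = ∑ i ∈ t, subsetExpect s p (f i) := by
  simp only [subsetExpect, mul_sum]
  exact sum_comm

lemma subsetExpect_mono (hp0 : 0 ≤ p) (hp1 : p ≤ 1) {f g : Finset α → ℝ}
    (h : ∀ F ⊆ s, f F ≤ g F) : subsetExpect s p f ≤ subsetExpect s p g :=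
  sum_le_sum fun F hF => mul_le_mul_of_nonneg_left (h F (mem_powerset.mp hF))
    (mul_nonneg (pow_nonneg hp0 _) (pow_nonneg (sub_nonneg.mpr hp1) _))

lemma subsetExpect_nonneg (hp0 : 0 ≤ p) (hp1 : p ≤ 1) {f : Finset α → ℝ}
    (h : ∀ F ⊆ s, 0 ≤ f F) : 0 ≤ subsetExpect s p f := by
  simpa only [subsetExpect_const] using subsetExpect_mono hp0 hp1 h

variable [DecidableEq α]

lemma subsetExpect_insert {a : α} (ha : a ∉ s) (f : Finset α → ℝ) :
    subsetExpect (insert a s) p f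
      = p * subsetExpect s p (fun F => f (insert a F)) + (1 - p) * subsetExpect s p f := by
  rw [subsetExpect, sum_powerset_insert ha, add_comm, subsetExpect, subsetExpect, mul_sum,
    mul_sum, card_insert_of_notMem ha]
  congr 1
  · refine sum_congr rfl fun F hF => ?_
    rw [card_insert_of_notMem (notMem_of_mem_powerset_of_notMem hF ha), Nat.add_sub_add_right,
      pow_succ]
    ring
  · refine sum_congr rfl fun F hF => ?_
    rw [Nat.succ_sub (card_le_card (mem_powerset.mp hF)), pow_succ]
    ring

lemma subsetExpect_sum_mem (g : α → ℝ) :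
    subsetExpect s p (fun F => ∑ e ∈ F, g e) = p * ∑ e ∈ s, g e := by
  induction s using Finset.induction_on with
  | empty => simp [subsetExpect]
  | @insert a s ha ih =>
    have hF : subsetExpect s p (fun F => ∑ e ∈ insert a F, g e)
        = subsetExpect s p (fun F => g a + ∑ e ∈ F, g e) :=
      subsetExpect_congr fun F hF => sum_insert (notMem_mono hF ha)
    rw [subsetExpect_insert ha, hF, subsetExpect_add, subsetExpect_const, ih, sum_insert ha]
    ring

lemma subsetExpect_sq_sum_mem (g : α → ℝ) :
    subsetExpect s p (fun F => (∑ e ∈ F, g e) ^ 2)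
      = p ^ 2 * (∑ e ∈ s, g e) ^ 2 + p * (1 - p) * ∑ e ∈ s, g e ^ 2 := by
  induction s using Finset.induction_on with
  | empty => simp [subsetExpect]
  | @insert a s ha ih =>
    have hF : subsetExpect s p (fun F => (∑ e ∈ insert a F, g e) ^ 2)
        = subsetExpect s p
            (fun F => g a ^ 2 + 2 * g a * ∑ e ∈ F, g e + (∑ e ∈ F, g e) ^ 2) :=
      subsetExpect_congr fun F hF => by rw [sum_insert (notMem_mono hF ha)]; ring
    rw [subsetExpect_insert ha, hF, subsetExpect_add, subsetExpect_add, subsetExpect_const,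
      subsetExpect_const_mul, subsetExpect_sum_mem, ih, sum_insert ha, sum_insert ha]
    ring

lemma subsetExpect_card_sub_sq :
    subsetExpect s p (fun F => ((#F : ℝ) - p * #s) ^ 2) = p * (1 - p) * #s := by
  have hcard : ∀ F : Finset α, (#F : ℝ) = ∑ _e ∈ F, 1 := fun F => by simp
  have hexpand : subsetExpect s p (fun F => ((#F : ℝ) - p * #s) ^ 2)
      = subsetExpect s p (fun F => (∑ _e ∈ F, (1 : ℝ)) ^ 2
          + -(2 * p * #s) * ∑ _e ∈ F, (1 : ℝ) + (p * #s) ^ 2) :=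
    subsetExpect_congr fun F _ => by rw [← hcard]; ring
  rw [hexpand, subsetExpect_add, subsetExpect_add, subsetExpect_const, subsetExpect_const_mul,
    subsetExpect_sum_mem, subsetExpect_sq_sum_mem, ← hcard]
  simp only [one_pow, ← hcard]
  ring

/-- Sampling with probability `q` from a `p`-random subset is sampling with probability `p * q`. -/
lemma subsetExpect_subsetExpect (q : ℝ) (g : Finset α → ℝ) :
    subsetExpect s p (fun F => subsetExpect F q g) = subsetExpect s (p * q) g := by
  induction s using Finset.induction_on generalizing g with
  | empty => simp [subsetExpect]
  | @insert a s ha ih =>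
    have hF : subsetExpect s p (fun F => subsetExpect (insert a F) q g)
        = subsetExpect s p (fun F => q * subsetExpect F q (fun F' => g (insert a F'))
            + (1 - q) * subsetExpect F q g) :=
      subsetExpect_congr fun F hF => subsetExpect_insert (notMem_mono hF ha) g
    rw [subsetExpect_insert ha, subsetExpect_insert ha, hF, subsetExpect_add,
      subsetExpect_const_mul, subsetExpect_const_mul, ih, ih]
    ring

lemma subsetExpect_card_lt_le (hp0 : 0 < p) (hp1 : p ≤ 1) {t : ℝ} (ht : t ≤ p * #s / 2) :
    subsetExpect s p (fun F => if (#F : ℝ) < t then 1 else 0) ≤ 4 / (p * #s) := by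
  rcases (Nat.cast_nonneg (α := ℝ) #s).eq_or_lt with hs | hs
  · rw [← hs, mul_zero, zero_div] at ht
    rw [← hs, mul_zero, div_zero]
    refine (subsetExpect_mono hp0.le hp1 (g := fun _ => 0) fun F _ => ?_).trans_eq
      (subsetExpect_const 0)
    exact (if_neg (ht.trans (Nat.cast_nonneg #F)).not_gt).le
  have hps : 0 < p * #s := mul_pos hp0 hs
  have hcheb : ∀ F ⊆ s, (if (#F : ℝ) < t then 1 else 0)
      ≤ ((#F : ℝ) - p * #s) ^ 2 / (p * #s / 2) ^ 2 := by
    intro F _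
    split_ifs with hF
    · rw [one_le_div (by positivity)]
      nlinarith [(Nat.cast_nonneg (α := ℝ) #F)]
    · positivity
  calc _ ≤ subsetExpect s p (fun F => ((#F : ℝ) - p * #s) ^ 2 / (p * #s / 2) ^ 2) :=
        subsetExpect_mono hp0.le hp1 hcheb
    _ = p * (1 - p) * #s / (p * #s / 2) ^ 2 := by
        rw [subsetExpect_div_const, subsetExpect_card_sub_sq]
    _ ≤ 4 / (p * #s) := by
        rw [div_le_div_iff₀ (by positivity) hps]
        nlinarith [mul_pos hps hps]

end SubsetExpect

lemma subsample_error_le {n q θ X Y : ℝ} (hn : 0 < n) (hq0 : 0 < q) (hθ0 : 0 < θ)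
    (hθ1 : θ ≤ 1 / 2) (hXn : X ≤ n) (hYn : Y ≤ 4 * n ^ 2) :
    X / n - Y / (4 * n ^ 2) - (9 * θ + 2 / (θ ^ 2 * (q * n)))
      ≤ q * X / ((1 + θ) * (q * n)) - q * (1 - q) * n / (θ * (q * n)) ^ 2
        - (q ^ 2 * Y + 4 * (q * n)) / (4 * ((1 - θ) * (q * n)) ^ 2) := by
  have hμ : 0 < q * n := mul_pos hq0 hn
  have h1θ : 0 < 1 - θ := by linarith
  have hcover : X / n - θ ≤ q * X / ((1 + θ) * (q * n)) := by
    rw [show q * X / ((1 + θ) * (q * n)) = X / n / (1 + θ) by field_simp,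
      le_div_iff₀ (by linarith)]
    nlinarith [(div_le_one hn).mpr hXn]
  have hdev : q * (1 - q) * n / (θ * (q * n)) ^ 2 ≤ 1 / (θ ^ 2 * (q * n)) := by
    rw [div_le_div_iff₀ (by positivity) (by positivity)]
    nlinarith [mul_pos (mul_pos hμ hμ) (mul_pos hθ0 hθ0)]
  have hvol : q ^ 2 * Y / (4 * ((1 - θ) * (q * n)) ^ 2) ≤ Y / (4 * n ^ 2) + 8 * θ := by
    rw [show q ^ 2 * Y / (4 * ((1 - θ) * (q * n)) ^ 2) = Y / (4 * n ^ 2) / (1 - θ) ^ 2 by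
      field_simp, div_le_iff₀ (by positivity)]
    have hb : Y / (4 * n ^ 2) ≤ 1 := (div_le_one (by positivity)).mpr hYn
    nlinarith [mul_le_mul_of_nonneg_right hb (by nlinarith : (0 : ℝ) ≤ 2 * θ - θ ^ 2)]
  have hvar : 4 * (q * n) / (4 * ((1 - θ) * (q * n)) ^ 2) ≤ 1 / (θ ^ 2 * (q * n)) := by
    rw [div_le_div_iff₀ (by positivity) (by positivity)]
    nlinarith [mul_pos hμ hμ]
  have htwo : 2 / (θ ^ 2 * (q * n)) = 1 / (θ ^ 2 * (q * n)) + 1 / (θ ^ 2 * (q * n)) := by ring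
  rw [add_div, htwo]
  linarith

section Graph

lemma card_filter_mem_sym2_le_two {α : Type*} [DecidableEq α] (A : Finset α) (e : Sym2 α) :
    #(A.filter (· ∈ e)) ≤ 2 := by
  calc #(A.filter (· ∈ e)) ≤ #e.toFinset :=
        card_le_card fun v hv => Sym2.mem_toFinset.mpr (mem_filter.mp hv).2
    _ ≤ 2 := by rw [Sym2.card_toFinset]; split_ifs <;> simp

variable {V : Type} [Fintype V] [DecidableEq V]

open SimpleGraph

omit [DecidableEq V] in
lemma edgeFinset_fromEdgeSet_of_subset {G : SimpleGraph V} {F : Finset (Sym2 V)}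
    (hF : F ⊆ G.edgeFinset) {_ : Fintype (fromEdgeSet (F : Set (Sym2 V))).edgeSet} :
    (fromEdgeSet (F : Set (Sym2 V))).edgeFinset = F := by
  ext e
  simp only [mem_edgeFinset, edgeSet_fromEdgeSet, Set.mem_sdiff, mem_coe,
    and_iff_left_iff_imp]
  exact fun he => G.not_isDiag_of_mem_edgeSet (mem_edgeFinset.mp (hF he))

lemma edgeCount_fromEdgeSet {G : SimpleGraph V} {F : Finset (Sym2 V)} (hF : F ⊆ G.edgeFinset) :
    edgeCount (fromEdgeSet (F : Set (Sym2 V))) = #F := by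
  rw [edgeCount, edgeFinset_fromEdgeSet_of_subset hF]

lemma intEdges_fromEdgeSet {G : SimpleGraph V} {F : Finset (Sym2 V)} (hF : F ⊆ G.edgeFinset)
    (A : Finset V) :
    intEdges (fromEdgeSet (F : Set (Sym2 V))) A = #(F.filter fun e => ∀ v ∈ e, v ∈ A) := by
  rw [intEdges, edgeFinset_fromEdgeSet_of_subset hF]

lemma degSum_eq_sum_edgeFinset (G : SimpleGraph V) (A : Finset V) :
    degSum G A = ∑ e ∈ G.edgeFinset, #(A.filter (· ∈ e)) := by
  simp only [degSum, ← card_incidenceFinset_eq_degree, incidenceFinset_eq_filter, card_filter]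
  exact sum_comm

lemma degSum_fromEdgeSet {G : SimpleGraph V} {F : Finset (Sym2 V)} (hF : F ⊆ G.edgeFinset)
    (A : Finset V) :
    degSum (fromEdgeSet (F : Set (Sym2 V))) A = ∑ e ∈ F, #(A.filter (· ∈ e)) := by
  rw [degSum_eq_sum_edgeFinset, edgeFinset_fromEdgeSet_of_subset hF]

lemma sum_intEdges_le_edgeCount (G : SimpleGraph V) (P : Finpartition (univ : Finset V)) :
    ∑ A ∈ P.parts, (intEdges G A : ℝ) ≤ edgeCount G := by
  simp only [intEdges, edgeCount]
  rw [← Nat.cast_sum, Nat.cast_le, ← card_biUnion]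
  · exact card_le_card (biUnion_subset.mpr fun A _ => filter_subset _ _)
  · intro A hA B hB hAB
    refine disjoint_left.mpr fun e heA heB => ?_
    induction e using Sym2.ind with
    | _ u v => exact hAB (P.eq_of_mem_parts hA hB ((mem_filter.mp heA).2 u (Sym2.mem_mk_left u v))
        ((mem_filter.mp heB).2 u (Sym2.mem_mk_left u v)))

lemma sum_degSum_eq (G : SimpleGraph V) (P : Finpartition (univ : Finset V)) :
    ∑ A ∈ P.parts, degSum G A = 2 * edgeCount G := by
  simp only [degSum, edgeCount]
  rw [← sum_degrees_eq_twice_card_edges]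
  conv_rhs => rw [← P.biUnion_parts, sum_biUnion P.disjoint]
  rfl

lemma modScore_le_modularity (G : SimpleGraph V) (P : Finpartition (univ : Finset V)) :
    modScore G P ≤ modularity G :=
  le_ciSup (Set.finite_range _).bddAbove P

lemma modScore_eq_of_edgeCount_ne_zero {G : SimpleGraph V} (hG : edgeCount G ≠ 0)
    (P : Finpartition (univ : Finset V)) :
    modScore G P = (∑ A ∈ P.parts, (intEdges G A : ℝ)) / edgeCount G
      - (∑ A ∈ P.parts, (degSum G A : ℝ) ^ 2) / (4 * (edgeCount G : ℝ) ^ 2) :=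
  if_neg hG

lemma modularity_le_one (G : SimpleGraph V) : modularity G ≤ 1 := by
  refine ciSup_le fun P => ?_
  by_cases hG : edgeCount G = 0
  · simp [modScore, hG]
  rw [modScore_eq_of_edgeCount_ne_zero hG]
  have hX : (∑ A ∈ P.parts, (intEdges G A : ℝ)) / edgeCount G ≤ 1 :=
    div_le_one_of_le₀ (sum_intEdges_le_edgeCount G P) (Nat.cast_nonneg _)
  have hY : 0 ≤ (∑ A ∈ P.parts, (degSum G A : ℝ) ^ 2) / (4 * (edgeCount G : ℝ) ^ 2) := by
    positivity
  linarith

lemma modularity_nonneg (G : SimpleGraph V) : 0 ≤ modularity G := by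
  by_cases hG : edgeCount G = 0
  · simpa [modScore, hG] using modScore_le_modularity G ⊥
  obtain ⟨e, he⟩ := card_pos.mp (Nat.pos_of_ne_zero hG)
  have huniv : (univ : Finset V) ≠ ⊥ :=
    (univ_nonempty_iff.mpr (Sym2.ind (fun u _ => ⟨u⟩) e)).ne_empty
  have hint : intEdges G univ = edgeCount G :=
    congrArg card (filter_true_of_mem fun _ _ v _ => mem_univ v)
  have hdeg : degSum G univ = 2 * edgeCount G := G.sum_degrees_eq_twice_card_edges
  refine le_of_eq_of_le ?_ (modScore_le_modularity G (.indiscrete huniv))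
  rw [modScore_eq_of_edgeCount_ne_zero hG, Finpartition.indiscrete_parts, sum_singleton,
    sum_singleton, hint, hdeg, Nat.cast_mul, Nat.cast_ofNat]
  field_simp
  ring

lemma modScore_estimate_le_modularity (G : SimpleGraph V) (P : Finpartition (univ : Finset V))
    {μ θ : ℝ} (hμ : 0 < μ) (hθ0 : 0 < θ) (hθ1 : θ < 1) :
    (∑ A ∈ P.parts, (intEdges G A : ℝ)) / ((1 + θ) * μ)
      - ((edgeCount G : ℝ) - μ) ^ 2 / (θ * μ) ^ 2
      - (∑ A ∈ P.parts, (degSum G A : ℝ) ^ 2) / (4 * ((1 - θ) * μ) ^ 2)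
      ≤ modularity G := by
  set m : ℝ := (edgeCount G : ℝ)
  set X := ∑ A ∈ P.parts, (intEdges G A : ℝ)
  set Y := ∑ A ∈ P.parts, (degSum G A : ℝ) ^ 2
  have hX0 : 0 ≤ X := by positivity
  have hXm : X ≤ m := sum_intEdges_le_edgeCount G P
  have hY0 : 0 ≤ Y := by positivity
  by_cases hwin : |m - μ| ≤ θ * μ
  · obtain ⟨hhi, hlo⟩ := abs_sub_le_iff.mp hwin
    have hm : 0 < m := by nlinarith
    have hG : edgeCount G ≠ 0 := (Nat.cast_pos.mp hm).ne'
    have hXle : X / ((1 + θ) * μ) ≤ X / m := div_le_div_of_nonneg_left hX0 hm (by linarith)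
    have hlow : 0 < (1 - θ) * μ := mul_pos (sub_pos.mpr hθ1) hμ
    have hYle : Y / (4 * m ^ 2) ≤ Y / (4 * ((1 - θ) * μ) ^ 2) :=
      div_le_div_of_nonneg_left hY0 (by positivity)
        (mul_le_mul_of_nonneg_left (pow_le_pow_left₀ hlow.le (by linarith) 2) (by norm_num))
    have hdev : 0 ≤ (m - μ) ^ 2 / (θ * μ) ^ 2 := by positivity
    calc _ ≤ X / m - Y / (4 * m ^ 2) := by linarith
      _ = modScore G P := (modScore_eq_of_edgeCount_ne_zero hG P).symm
      _ ≤ modularity G := modScore_le_modularity G P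
  · rw [not_le] at hwin
    set d := |m - μ|
    have hθμ : 0 < θ * μ := mul_pos hθ0 hμ
    -- an edge count far from `μ` makes the deviation penalty exceed the whole coverage term
    have hXdev : X / ((1 + θ) * μ) ≤ (m - μ) ^ 2 / (θ * μ) ^ 2 :=
      calc X / ((1 + θ) * μ) ≤ m / ((1 + θ) * μ) := by gcongr
        _ ≤ d / (θ * μ) := by
          rw [div_le_div_iff₀ (by positivity) hθμ]
          nlinarith [le_abs_self (m - μ)]
        _ ≤ (d / (θ * μ)) ^ 2 := le_self_pow₀ ((one_le_div hθμ).mpr hwin.le) two_ne_zero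
        _ = (m - μ) ^ 2 / (θ * μ) ^ 2 := by rw [div_pow, sq_abs]
    have hY : 0 ≤ Y / (4 * ((1 - θ) * μ) ^ 2) := by positivity
    linarith [modularity_nonneg G]

lemma expMod_eq_subsetExpect (G : SimpleGraph V) (p : ℝ) :
    expMod G p
      = subsetExpect G.edgeFinset p (fun F => modularity (fromEdgeSet (F : Set (Sym2 V)))) :=
  rfl

lemma expMod_nonneg (G : SimpleGraph V) {p : ℝ} (hp0 : 0 ≤ p) (hp1 : p ≤ 1) :
    0 ≤ expMod G p :=
  subsetExpect_nonneg hp0 hp1 fun _ _ => modularity_nonneg _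

lemma expMod_mul (G : SimpleGraph V) (p q : ℝ) :
    expMod G (p * q)
      = subsetExpect G.edgeFinset p (fun F => expMod (fromEdgeSet (F : Set (Sym2 V))) q) := by
  rw [expMod_eq_subsetExpect, ← subsetExpect_subsetExpect]
  exact subsetExpect_congr fun F hF => by
    rw [expMod_eq_subsetExpect, edgeFinset_fromEdgeSet_of_subset hF]

section Partition

variable (H : SimpleGraph V) (P : Finpartition (univ : Finset V)) (q : ℝ)

lemma subsetExpect_sum_intEdges :
    subsetExpect H.edgeFinset q (fun F => ∑ A ∈ P.parts,
        (intEdges (fromEdgeSet (F : Set (Sym2 V))) A : ℝ))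
      = q * ∑ A ∈ P.parts, (intEdges H A : ℝ) := by
  rw [subsetExpect_congr fun F hF => sum_congr rfl fun A _ => by
    rw [intEdges_fromEdgeSet hF, natCast_card_filter], subsetExpect_sum, mul_sum]
  refine sum_congr rfl fun A _ => ?_
  rw [subsetExpect_sum_mem, intEdges, natCast_card_filter]

lemma subsetExpect_edgeCount_sub_sq :
    subsetExpect H.edgeFinset q (fun F =>
        ((edgeCount (fromEdgeSet (F : Set (Sym2 V))) : ℝ) - q * edgeCount H) ^ 2)
      = q * (1 - q) * edgeCount H := by
  rw [subsetExpect_congr fun F hF => by rw [edgeCount_fromEdgeSet hF]]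
  exact subsetExpect_card_sub_sq

lemma subsetExpect_sum_degSum_sq_le (hq0 : 0 ≤ q) :
    subsetExpect H.edgeFinset q (fun F => ∑ A ∈ P.parts,
        (degSum (fromEdgeSet (F : Set (Sym2 V))) A : ℝ) ^ 2)
      ≤ q ^ 2 * ∑ A ∈ P.parts, (degSum H A : ℝ) ^ 2 + 4 * (q * edgeCount H) := by
  have hdeg : ∀ A, (degSum H A : ℝ) = ∑ e ∈ H.edgeFinset, (#(A.filter (· ∈ e)) : ℝ) :=
    fun A => by rw [degSum_eq_sum_edgeFinset, Nat.cast_sum]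
  have hsq : ∀ (A : Finset V) (e : Sym2 V),
      (#(A.filter (· ∈ e)) : ℝ) ^ 2 ≤ 2 * #(A.filter (· ∈ e)) :=
    fun A e => by
      have h2 : (#(A.filter (· ∈ e)) : ℝ) ≤ 2 := by
        exact_mod_cast card_filter_mem_sym2_le_two A e
      nlinarith [(Nat.cast_nonneg (α := ℝ) #(A.filter (· ∈ e)))]
  have hvar :
      ∑ A ∈ P.parts, q * (1 - q) * ∑ e ∈ H.edgeFinset, (#(A.filter (· ∈ e)) : ℝ) ^ 2
      ≤ 4 * (q * edgeCount H) :=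
    calc _ ≤ ∑ A ∈ P.parts, q * ∑ e ∈ H.edgeFinset, 2 * (#(A.filter (· ∈ e)) : ℝ) :=
          sum_le_sum fun A _ => mul_le_mul (by nlinarith) (sum_le_sum fun e _ => hsq A e)
            (sum_nonneg fun e _ => sq_nonneg _) hq0
      _ = 4 * (q * edgeCount H) := by
          simp only [← mul_sum, ← hdeg, ← Nat.cast_sum, sum_degSum_eq]
          push_cast
          ring
  rw [subsetExpect_congr fun F hF => sum_congr rfl fun A _ => by
    rw [degSum_fromEdgeSet hF, Nat.cast_sum], subsetExpect_sum]
  simp only [subsetExpect_sq_sum_mem, sum_add_distrib, ← hdeg, ← mul_sum] at hvar ⊢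
  linarith

end Partition

lemma modScore_sub_le_expMod (H : SimpleGraph V) (P : Finpartition (univ : Finset V))
    {q θ : ℝ} (hq0 : 0 < q) (hq1 : q ≤ 1) (hθ0 : 0 < θ) (hθ1 : θ ≤ 1 / 2)
    (hμ : 0 < q * edgeCount H) :
    modScore H P - (9 * θ + 2 / (θ ^ 2 * (q * edgeCount H))) ≤ expMod H q := by
  set n : ℝ := (edgeCount H : ℝ)
  have hn : 0 < n := pos_of_mul_pos_right hμ hq0.le
  have hH : edgeCount H ≠ 0 := (Nat.cast_pos.mp hn).ne'
  have hYn : ∑ A ∈ P.parts, (degSum H A : ℝ) ^ 2 ≤ 4 * n ^ 2 :=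
    calc _ ≤ (∑ A ∈ P.parts, (degSum H A : ℝ)) ^ 2 :=
          sum_sq_le_sq_sum_of_nonneg fun _ _ => Nat.cast_nonneg _
      _ = 4 * n ^ 2 := by rw [← Nat.cast_sum, sum_degSum_eq]; push_cast; ring
  have hpointwise := fun F (hF : F ⊆ H.edgeFinset) =>
    modScore_estimate_le_modularity (fromEdgeSet (F : Set (Sym2 V))) P hμ hθ0 (by linarith)
  calc modScore H P - (9 * θ + 2 / (θ ^ 2 * (q * n)))
      ≤ q * (∑ A ∈ P.parts, (intEdges H A : ℝ)) / ((1 + θ) * (q * n))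
        - q * (1 - q) * n / (θ * (q * n)) ^ 2
        - (q ^ 2 * ∑ A ∈ P.parts, (degSum H A : ℝ) ^ 2 + 4 * (q * n))
          / (4 * ((1 - θ) * (q * n)) ^ 2) := by
        rw [modScore_eq_of_edgeCount_ne_zero hH]
        exact subsample_error_le hn hq0 hθ0 hθ1 (sum_intEdges_le_edgeCount H P) hYn
    _ ≤ subsetExpect H.edgeFinset q (fun F =>
          (∑ A ∈ P.parts, (intEdges (fromEdgeSet (F : Set (Sym2 V))) A : ℝ))
            / ((1 + θ) * (q * n))
          - ((edgeCount (fromEdgeSet (F : Set (Sym2 V))) : ℝ) - q * n) ^ 2 / (θ * (q * n)) ^ 2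
          - (∑ A ∈ P.parts, (degSum (fromEdgeSet (F : Set (Sym2 V))) A : ℝ) ^ 2)
            / (4 * ((1 - θ) * (q * n)) ^ 2)) := by
        rw [subsetExpect_sub, subsetExpect_sub, subsetExpect_div_const, subsetExpect_div_const,
          subsetExpect_div_const, subsetExpect_sum_intEdges, subsetExpect_edgeCount_sub_sq]
        gcongr
        exact subsetExpect_sum_degSum_sq_le H P q hq0.le
    _ ≤ expMod H q := subsetExpect_mono hq0.le hq1 hpointwise

lemma expMod_sub_le_expMod_mul (G : SimpleGraph V) {p q c δ : ℝ} (hp0 : 0 ≤ p) (hp1 : p ≤ 1)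
    (hq0 : 0 < q) (hq1 : q ≤ 1) (hδ : 0 ≤ δ)
    (h : ∀ H : SimpleGraph V, c ≤ q * edgeCount H → modularity H - δ ≤ expMod H q) :
    expMod G p - δ - subsetExpect G.edgeFinset p (fun F => if (#F : ℝ) < c / q then 1 else 0)
      ≤ expMod G (p * q) := by
  rw [expMod_mul, expMod_eq_subsetExpect, ← subsetExpect_const (s := G.edgeFinset) (p := p) δ,
    ← subsetExpect_sub, ← subsetExpect_sub]
  refine subsetExpect_mono hp0 hp1 fun F hF => ?_
  split_ifs with hsmall
  · linarith [modularity_le_one (fromEdgeSet (F : Set (Sym2 V))),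
      expMod_nonneg (fromEdgeSet (F : Set (Sym2 V))) hq0.le hq1]
  · have hc : c ≤ q * edgeCount (fromEdgeSet (F : Set (Sym2 V))) := by
      rw [edgeCount_fromEdgeSet hF, ← div_le_iff₀' hq0]
      exact not_lt.mp hsmall
    linarith [h _ hc]

end Graph

lemma exists_modularity_sub_le_expMod {ε : ℝ} (hε : 0 < ε) :
    ∃ c > 0, ∀ (V : Type) [Fintype V] [DecidableEq V] (H : SimpleGraph V) (q : ℝ),
      0 < q → q ≤ 1 → c ≤ q * edgeCount H → modularity H - ε ≤ expMod H q := by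
  set θ := min (ε / 18) (1 / 2)
  have hθ0 : 0 < θ := lt_min (by positivity) (by norm_num)
  have hθε : 9 * θ ≤ ε / 2 := by linarith [min_le_left (ε / 18) (1 / 2)]
  refine ⟨4 / (θ ^ 2 * ε), by positivity, fun V _ _ H q hq0 hq1 hc => ?_⟩
  have hμ : 0 < q * edgeCount H := lt_of_lt_of_le (by positivity) hc
  have herr : 2 / (θ ^ 2 * (q * edgeCount H)) ≤ ε / 2 := by
    rw [div_le_iff₀ (by positivity)]
    rw [div_le_iff₀ (by positivity)] at hc
    nlinarith
  refine sub_le_iff_le_add.mpr (ciSup_le fun P => ?_)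
  linarith [modScore_sub_le_expMod H P hq0 hq1 hθ0 (min_le_right _ _) hμ]

/-- Under-sampling does not significantly underestimate modularity on average:
for every ε > 0 there is c > 0 such that for every 0 < p₀ ≤ 1 and every finite
graph H with e(H)·p₀ ≥ c, E[q*(H_{p₀})] > sup_{p₀ ≤ p ≤ 1} E[q*(H_p)] − ε
(equivalently, E[q*(H_p)] − ε < E[q*(H_{p₀})] for every p₀ ≤ p ≤ 1). -/
theorem statement18 :
    ∀ ε : ℝ, 0 < ε →
      ∃ c : ℝ, 0 < c ∧
        ∀ (V : Type) [Fintype V] [DecidableEq V] (G : SimpleGraph V) (p₀ : ℝ),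
          0 < p₀ → p₀ ≤ 1 → c ≤ (edgeCount G : ℝ) * p₀ →
          ∀ p : ℝ, p₀ ≤ p → p ≤ 1 → expMod G p - ε < expMod G p₀ := by
  intro ε hε
  obtain ⟨c, hc0, hc⟩ := exists_modularity_sub_le_expMod (half_pos hε)
  refine ⟨2 * c + 16 / ε, by positivity, fun V _ _ G p₀ hp₀ hp₀1 hG p hp hp1 => ?_⟩
  have hp0 : 0 < p := hp₀.trans_le hp
  set n : ℝ := (#G.edgeFinset : ℝ)
  have hn : 2 * c + 16 / ε ≤ n * p₀ := hG
  have hn0 : 0 < n := pos_of_mul_pos_left (lt_of_lt_of_le (by positivity) hn) hp₀.le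
  have hq0 : 0 < p₀ / p := div_pos hp₀ hp0
  have hsample := expMod_sub_le_expMod_mul G hp0.le hp1 hq0 (div_le_one_of_le₀ hp hp0.le)
    (half_pos hε).le (hc V · _ hq0 (div_le_one_of_le₀ hp hp0.le))
  rw [mul_div_cancel₀ p₀ hp0.ne'] at hsample
  have hcheb : subsetExpect G.edgeFinset p (fun F => if (#F : ℝ) < c / (p₀ / p) then 1 else 0)
      ≤ 4 / (p * n) := by
    refine subsetExpect_card_lt_le hp0 hp1 (?_ : c / (p₀ / p) ≤ p * n / 2)
    rw [div_div_eq_mul_div, div_le_iff₀ hp₀]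
    have hc : c ≤ n * p₀ / 2 := by linarith [div_pos (by norm_num : (0 : ℝ) < 16) hε]
    nlinarith [mul_le_mul_of_nonneg_left hc hp0.le]
  have hpn : 4 / (p * n) ≤ ε / 4 := by
    rw [div_le_div_iff₀ (by positivity) (by norm_num)]
    have h16 : 16 ≤ ε * (n * p₀) := by
      rw [← div_le_iff₀' hε]
      linarith
    nlinarith [mul_le_mul_of_nonneg_left hp (mul_pos hε hn0).le]
  linarith
end

section
/- Let 0 < ρ < 1 and let δ > 0 satisfy 4δ ≤ ρ. Let G and G′ be graphs on the same vertex set V of size n, each with at least ρ·n²/2 edges, and let 𝒜 = (A₁, …, A_k) be a partition of V. Suppose that |vol_G(A_i) − vol_{G′}(A_i)| ≤ δ·n² for each i = 1, …, k, and |vol(G) − vol(G′)| ≤ δ·n². Then the degree taxes satisfy q^D_𝒜(G′) ≤ q^D_𝒜(G) + 6δ/ρ. -/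
open Finset
open scoped Classical

lemma sum_degSum {V : Type} [Fintype V] [DecidableEq V] (G : SimpleGraph V)
    (P : Finpartition (univ : Finset V)) :
    ∑ A ∈ P.parts, (degSum G A : ℝ) = 2 * (edgeCount G : ℝ) := by
  have h : ∑ v ∈ P.parts.biUnion id, G.degree v = ∑ A ∈ P.parts, ∑ v ∈ id A, G.degree v :=
    Finset.sum_biUnion P.supIndep.pairwiseDisjoint
  rw [P.biUnion_parts] at h
  have : ∑ A ∈ P.parts, degSum G A = 2 * edgeCount G := by
    unfold degSum edgeCount
    rw [← SimpleGraph.sum_degrees_eq_twice_card_edges G, h]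
    rfl
  exact_mod_cast congrArg (Nat.cast : ℕ → ℝ) this


set_option maxHeartbeats 1600000 in
/-- Degree-tax stability: let 0 < ρ < 1 and 0 < δ with 4δ ≤ ρ. Let G, G′ be graphs
on the same n-element vertex set, each with at least ρ·n²/2 edges, and let 𝒜 be a
partition of the vertex set with |vol_G(A) − vol_{G′}(A)| ≤ δ·n² for every part A,
and |vol(G) − vol(G′)| ≤ δ·n². Then the degree taxes
q^D_𝒜(H) = (Σ_{A∈𝒜} vol_H(A)²) / vol(H)², where vol(H) = 2·e(H), satisfy
q^D_𝒜(G′) ≤ q^D_𝒜(G) + 6δ/ρ. -/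
theorem statement19 (ρ δ : ℝ) (hρ0 : 0 < ρ) (hρ1 : ρ < 1) (hδ : 0 < δ)
    (h4δ : 4 * δ ≤ ρ)
    (V : Type) [Fintype V] [DecidableEq V] (G G' : SimpleGraph V)
    (hG : ρ * (Fintype.card V : ℝ) ^ 2 / 2 ≤ (edgeCount G : ℝ))
    (hG' : ρ * (Fintype.card V : ℝ) ^ 2 / 2 ≤ (edgeCount G' : ℝ))
    (P : Finpartition (univ : Finset V))
    (hparts : ∀ A ∈ P.parts,
      |(degSum G A : ℝ) - (degSum G' A : ℝ)| ≤ δ * (Fintype.card V : ℝ) ^ 2)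
    (hvol : |2 * (edgeCount G : ℝ) - 2 * (edgeCount G' : ℝ)|
      ≤ δ * (Fintype.card V : ℝ) ^ 2) :
    (∑ A ∈ P.parts, (degSum G' A : ℝ) ^ 2) / (2 * (edgeCount G' : ℝ)) ^ 2
      ≤ (∑ A ∈ P.parts, (degSum G A : ℝ) ^ 2) / (2 * (edgeCount G : ℝ)) ^ 2
        + 6 * δ / ρ := by
  by_cases hn : Fintype.card V = 0
  · have hP : P.parts = ∅ := by
      rw [Finset.eq_empty_iff_forall_notMem]
      intro A hA
      obtain ⟨v, _⟩ := P.nonempty_of_mem_parts hA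
      exact (Fintype.card_eq_zero_iff.mp hn).false v
    rw [hP]
    simp only [Finset.sum_empty, zero_div]
    positivity
  -- main case
  set N : ℝ := (Fintype.card V : ℝ) ^ 2 with hN
  have hNpos : 0 < N := by
    have : 0 < (Fintype.card V : ℝ) := by exact_mod_cast Nat.pos_of_ne_zero hn
    positivity
  set m : ℝ := 2 * (edgeCount G : ℝ) with hm
  set m' : ℝ := 2 * (edgeCount G' : ℝ) with hm'
  set s : ℝ := ∑ A ∈ P.parts, (degSum G A : ℝ) ^ 2 with hs
  set s' : ℝ := ∑ A ∈ P.parts, (degSum G' A : ℝ) ^ 2 with hs'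
  have hmN : ρ * N ≤ m := by rw [hm]; linarith
  have hm'N : ρ * N ≤ m' := by rw [hm']; linarith
  have hmpos : 0 < m := lt_of_lt_of_le (by positivity) hmN
  have hm'pos : 0 < m' := lt_of_lt_of_le (by positivity) hm'N
  have hsumG : ∑ A ∈ P.parts, (degSum G A : ℝ) = m := sum_degSum G P
  have hsumG' : ∑ A ∈ P.parts, (degSum G' A : ℝ) = m' := sum_degSum G' P
  have hs_nonneg : 0 ≤ s := Finset.sum_nonneg fun A _ => by positivity
  have hs_le : s ≤ m ^ 2 := by
    rw [← hsumG]
    exact Finset.sum_sq_le_sq_sum_of_nonneg fun A _ => Nat.cast_nonneg _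
  have hvol' : |m - m'| ≤ δ * N := hvol
  rw [abs_le] at hvol'
  have hs'_le : s' ≤ s + δ * N * (m + m') := by
    have hpt : ∀ A ∈ P.parts, (degSum G' A : ℝ) ^ 2
        ≤ (degSum G A : ℝ) ^ 2 + δ * N * ((degSum G A : ℝ) + (degSum G' A : ℝ)) := by
      intro A hA
      have h1 := hparts A hA
      rw [abs_le] at h1
      have h2 : (0:ℝ) ≤ (degSum G A : ℝ) := Nat.cast_nonneg _
      have h3 : (0:ℝ) ≤ (degSum G' A : ℝ) := Nat.cast_nonneg _
      nlinarith [h1.1, h1.2]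
    calc s' ≤ ∑ A ∈ P.parts, ((degSum G A : ℝ) ^ 2
          + δ * N * ((degSum G A : ℝ) + (degSum G' A : ℝ))) := Finset.sum_le_sum hpt
      _ = s + δ * N * (m + m') := by
          rw [Finset.sum_add_distrib, ← Finset.mul_sum, Finset.sum_add_distrib,
            hsumG, hsumG']
  -- key algebraic step
  have hδN : 4 * (δ * N) ≤ m' := le_trans (by nlinarith) hm'N
  have hδNm : 4 * (δ * N) ≤ m := le_trans (by nlinarith) hmN
  have h4 : s * (m - m') ≤ m ^ 2 * (δ * N) := by
    rcases le_total m' m with h | h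
    · have h1 : s * (m - m') ≤ m ^ 2 * (m - m') :=
        mul_le_mul_of_nonneg_right hs_le (sub_nonneg.mpr h)
      have h2 : m ^ 2 * (m - m') ≤ m ^ 2 * (δ * N) :=
        mul_le_mul_of_nonneg_left hvol'.2 (sq_nonneg m)
      linarith
    · have h1 : s * (m - m') ≤ 0 :=
        mul_nonpos_of_nonneg_of_nonpos hs_nonneg (by linarith)
      have h2 : (0:ℝ) ≤ m ^ 2 * (δ * N) := by positivity
      linarith
  have key : s' * (m ^ 2 * ρ) ≤ (s * ρ + 6 * δ * m ^ 2) * m' ^ 2 := by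
    have step3 : s' * (m ^ 2 * ρ) ≤ s * (m ^ 2 * ρ) + δ * N * (m + m') * (m ^ 2 * ρ) :=
      calc s' * (m ^ 2 * ρ) ≤ (s + δ * N * (m + m')) * (m ^ 2 * ρ) :=
            mul_le_mul_of_nonneg_right hs'_le (by positivity)
        _ = s * (m ^ 2 * ρ) + δ * N * (m + m') * (m ^ 2 * ρ) := by ring
    have step4 : s * (m ^ 2 * ρ) ≤ s * (m' ^ 2 * ρ) + δ * N * (m + m') * (m ^ 2 * ρ) := by
      have h5 : s * (m - m') * ((m + m') * ρ) ≤ m ^ 2 * (δ * N) * ((m + m') * ρ) :=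
        mul_le_mul_of_nonneg_right h4 (by positivity)
      linarith [h5]
    have h9 : m + m' ≤ (9/4) * m' := by linarith
    have h10 : ρ * N * (m + m') ≤ m' * ((9/4) * m') :=
      mul_le_mul hm'N h9 (by positivity) hm'pos.le
    have step5 : 2 * (δ * N * (m + m') * (m ^ 2 * ρ)) ≤ 6 * δ * m ^ 2 * m' ^ 2 := by
      have h11 : (2 * δ * m ^ 2) * (ρ * N * (m + m')) ≤ (2 * δ * m ^ 2) * (m' * ((9/4) * m')) :=
        mul_le_mul_of_nonneg_left h10 (by positivity)
      linarith [h11, mul_pos (mul_pos hδ (pow_pos hmpos 2)) (pow_pos hm'pos 2)]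
    linarith [step3, step4, step5]
  -- conclude
  have hfin : s' / m' ^ 2 ≤ (s * ρ + 6 * δ * m ^ 2) / (m ^ 2 * ρ) := by
    rw [div_le_div_iff₀ (pow_pos hm'pos 2) (mul_pos (pow_pos hmpos 2) hρ0)]
    exact key
  have heq : (s * ρ + 6 * δ * m ^ 2) / (m ^ 2 * ρ) = s / m ^ 2 + 6 * δ / ρ := by
    field_simp
  rw [heq] at hfin
  exact hfin
end
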